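/- Consider the homoscedastic linear location model Q_τ(Yᵢ | xᵢ, θ) = xᵢᵀβ + σ·F⁻¹(τ) with random (β, σ), with intercept x_{i1} = 1 for all i, and X of full column rank. Then the optimal action δ̂ = (XᵀX)⁻¹XᵀE[Q_τ] satisfies δ̂₁ = E[β₁ + σF⁻¹(τ)] and δ̂ⱼ = E[βⱼ] for j = 2,…,p. In particular, for j ≥ 2 the coefficients δ̂ⱼ do not depend on τ. -/

import Mathlib

/-!
Since the intercept column of `X` is constant one, the posterior mean of `Q_τ` is `X` applied to
`E[β] + E[σ] F⁻¹(τ) e₁`, and the least-squares map `y ↦ (XᵀX)⁻¹Xᵀy` recovers `v` from `Xv`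
whenever `XᵀX` is invertible. Hence `δ̂ = E[β] + E[σ] F⁻¹(τ) e₁`, and `τ` enters only the intercept.
-/

open MeasureTheory Matrix

theorem Matrix.nonsing_inv_transpose_mul_self_mulVec_transpose_mulVec {m n R : Type*}
    [Fintype m] [Fintype n] [DecidableEq n] [CommRing R]
    (X : Matrix m n R) (hX : IsUnit (Xᵀ * X).det) (v : n → R) :
    (Xᵀ * X)⁻¹ *ᵥ (Xᵀ *ᵥ (X *ᵥ v)) = v := by
  rw [mulVec_mulVec, mulVec_mulVec, Matrix.mul_assoc, nonsing_inv_mul _ hX, one_mulVec]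

theorem Matrix.mulVec_single_of_col_eq_one {m n R : Type*} [Fintype n] [DecidableEq n]
    [NonAssocSemiring R] (X : Matrix m n R) {k : n} (hk : ∀ i, X i k = 1) (c : R) :
    X *ᵥ Pi.single k c = fun _ => c := by
  ext i
  simp [mulVec_single, hk]

section Integral

variable {Ω ι κ : Type*} [MeasurableSpace Ω] {μ : Measure Ω} [Fintype κ]

theorem MeasureTheory.Integrable.mulVec_apply (A : Matrix ι κ ℝ) {f : Ω → κ → ℝ}
    (hf : ∀ j, Integrable (fun ω => f ω j) μ) (i : ι) :
    Integrable (fun ω => (A *ᵥ f ω) i) μ :=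
  integrable_finsetSum _ fun j _ => (hf j).const_mul (A i j)

theorem MeasureTheory.integral_mulVec_apply (A : Matrix ι κ ℝ) {f : Ω → κ → ℝ}
    (hf : ∀ j, Integrable (fun ω => f ω j) μ) (i : ι) :
    ∫ ω, (A *ᵥ f ω) i ∂μ = (A *ᵥ fun j => ∫ ω, f ω j ∂μ) i := by
  simp only [mulVec, dotProduct]
  rw [integral_finsetSum _ fun j _ => (hf j).const_mul (A i j)]
  simp only [integral_const_mul]

end Integral

theorem stmt_6_general {Ω : Type*} [MeasurableSpace Ω] (μ : Measure Ω)
    {n p : ℕ} [NeZero p] (β : Ω → Fin p → ℝ) (σ : Ω → ℝ)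
    (hβ : ∀ j, Integrable (fun ω => β ω j) μ) (hσ : Integrable σ μ)
    (X : Matrix (Fin n) (Fin p) ℝ) (hX : IsUnit (Xᵀ * X).det)
    (hint : ∀ i, X i 0 = 1)
    (Finvτ : ℝ)
    (Qτ : Ω → Fin n → ℝ) (hQτ : ∀ ω i, Qτ ω i = X.mulVec (β ω) i + σ ω * Finvτ)
    (δhat : Fin p → ℝ)
    (hδhat : δhat = (Xᵀ * X)⁻¹.mulVec (Xᵀ.mulVec (fun i => ∫ ω, Qτ ω i ∂μ))) :
    δhat 0 = ∫ ω, (β ω 0 + σ ω * Finvτ) ∂μ ∧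
      ∀ j : Fin p, j ≠ 0 → δhat j = ∫ ω, β ω j ∂μ := by
  set meanβ : Fin p → ℝ := fun j => ∫ ω, β ω j ∂μ
  set shift : ℝ := ∫ ω, σ ω * Finvτ ∂μ
  have hmeanQ : (fun i => ∫ ω, Qτ ω i ∂μ) = X *ᵥ (meanβ + Pi.single 0 shift) := by
    ext i
    simp_rw [hQτ]
    rw [integral_add (Integrable.mulVec_apply X hβ i) (hσ.mul_const _),
      integral_mulVec_apply X hβ, mulVec_add, mulVec_single_of_col_eq_one X hint]
    rfl
  have hδ : δhat = meanβ + Pi.single 0 shift := by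
    rw [hδhat, hmeanQ, nonsing_inv_transpose_mul_self_mulVec_transpose_mulVec X hX]
  refine ⟨?_, fun j hj => ?_⟩
  · rw [hδ, integral_add (hβ 0) (hσ.mul_const _)]
    simp [meanβ, shift]
  · simp [hδ, hj, meanβ]

/-- Corollary 1: for the homoscedastic linear model with quantiles
`Q_τ(Yᵢ|xᵢ,θ) = xᵢᵀβ + σF⁻¹(τ)` and intercept `x_{i1} = 1`, the optimal linear action
is the posterior mean of the coefficients with a quantile-specific intercept shift;
the non-intercept coefficients do not depend on τ. -/
theorem stmt_6 {Ω : Type*} [MeasurableSpace Ω] (μ : Measure Ω) [IsProbabilityMeasure μ]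
    {n p : ℕ} [NeZero p] (β : Ω → Fin p → ℝ) (σ : Ω → ℝ)
    (hβ : ∀ j, Integrable (fun ω => β ω j) μ) (hσ : Integrable σ μ)
    (X : Matrix (Fin n) (Fin p) ℝ) (hX : IsUnit (Xᵀ * X).det)
    (hint : ∀ i, X i 0 = 1)
    (Finvτ : ℝ)
    (Qτ : Ω → Fin n → ℝ) (hQτ : ∀ ω i, Qτ ω i = X.mulVec (β ω) i + σ ω * Finvτ)
    (δhat : Fin p → ℝ)
    (hδhat : δhat = (Xᵀ * X)⁻¹.mulVec (Xᵀ.mulVec (fun i => ∫ ω, Qτ ω i ∂μ))) :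
    δhat 0 = ∫ ω, (β ω 0 + σ ω * Finvτ) ∂μ ∧
      ∀ j : Fin p, j ≠ 0 → δhat j = ∫ ω, β ω j ∂μ :=
  stmt_6_general μ β σ hβ hσ X hX hint Finvτ Qτ hQτ δhat hδhat
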